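/- arXiv:0902.2329 — 2 statements merged into one kernel-verified Lean document; each statement's English description precedes it below -/
import Mathlib

section
/- For nonnegative integers A, B, C with C <= B <= A, the sum over j from C to B of C^{A-j}_{B-j} * binomial(2j+1, j-C) equals binomial(A+B+2, B-C), where C^m_k = ((m-k+1)/(m+1)) * binomial(m+k, k). -/
/-!
With `r b k = catT (b + k - 1) k` (the Raney numbers, whose generating function is `c(x) ^ b`
for the Catalan series `c`), the Pascal rule of the Catalan triangle reads
`r (b + 1) (k + 1) = r b (k + 1) + r (b + 2) k`, and `choose (2 * j + s) j` obeys the same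
recurrence in `s`. So the convolution `∑_{i + j = n} r b i * choose (2 * j + m) j` equals
`choose (2 * n + m + b) n` by induction on `n` and `b`; the theorem is the case
`n = B - C`, `b = A - B + 1`, `m = 2 * C + 1`, after substituting `(i, j) = (B - j, j - C)`.
-/

/-- The Catalan triangle number `C^m_n = ((m-n+1)/(m+1)) * C(m+n, n)` as a rational. -/
def catT (m n : ℕ) : ℚ := (((m : ℚ) - n + 1) / ((m : ℚ) + 1)) * Nat.choose (m + n) n

open Finset

lemma catT_zero_right (m : ℕ) : catT m 0 = 1 := by
  simp [catT, (by positivity : (m : ℚ) + 1 ≠ 0)]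

lemma catT_self_succ (k : ℕ) : catT k (k + 1) = 0 := by
  simp [catT]

lemma catT_succ_succ (m n : ℕ) : catT (m + 1) (n + 1) = catT m (n + 1) + catT (m + 1) n := by
  have hsucc : ((m + n + 1).choose (n + 1) : ℚ) * (n + 1) = (m + n + 1).choose n * (m + 1) := by
    have h := Nat.choose_succ_right_eq (m + n + 1) n
    rw [show m + n + 1 - n = m + 1 by omega] at h
    exact_mod_cast h
  have hpascal : ((m + 1 + (n + 1)).choose (n + 1) : ℚ)
      = (m + n + 1).choose n + (m + n + 1).choose (n + 1) := by
    rw [show m + 1 + (n + 1) = m + n + 1 + 1 by omega, Nat.choose_succ_succ']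
    push_cast; ring
  unfold catT
  rw [hpascal, show m + (n + 1) = m + n + 1 by omega, show m + 1 + n = m + n + 1 by omega]
  have : (m : ℚ) + 1 ≠ 0 := by positivity
  push_cast
  field_simp
  linear_combination hsucc

lemma choose_two_mul_succ_add_succ (n s : ℕ) :
    (2 * (n + 1) + (s + 1)).choose (n + 1)
      = (2 * (n + 1) + s).choose (n + 1) + (2 * n + (s + 2)).choose n := by
  rw [show 2 * (n + 1) + (s + 1) = 2 * n + (s + 2) + 1 by ring, Nat.choose_succ_succ',
    show 2 * (n + 1) + s = 2 * n + (s + 2) by ring, add_comm]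

-- At `b = 0` the truncated subtraction makes the weights `catT (k - 1) k` equal to `1, 0, 0, …`.
theorem sum_antidiagonal_catT_mul_choose (n b m : ℕ) :
    ∑ p ∈ antidiagonal n, catT (b + p.1 - 1) p.1 * ((2 * p.2 + m).choose p.2 : ℚ)
      = (2 * n + (m + b)).choose n := by
  induction n generalizing b with
  | zero => simp [catT_zero_right]
  | succ n ihn =>
    induction b with
    | zero =>
      rw [Nat.sum_antidiagonal_succ]
      simp [catT_zero_right, catT_self_succ]
    | succ b ihb =>
      rw [Nat.sum_antidiagonal_succ] at ihb ⊢
      have hstep : ∀ p ∈ antidiagonal n,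
          catT (b + 1 + (p.1 + 1) - 1) (p.1 + 1) * ((2 * p.2 + m).choose p.2 : ℚ)
            = catT (b + (p.1 + 1) - 1) (p.1 + 1) * (2 * p.2 + m).choose p.2
              + catT (b + 2 + p.1 - 1) p.1 * (2 * p.2 + m).choose p.2 := by
        intro p _
        rw [show b + 1 + (p.1 + 1) - 1 = b + p.1 + 1 by omega,
          show b + (p.1 + 1) - 1 = b + p.1 by omega, show b + 2 + p.1 - 1 = b + p.1 + 1 by omega,
          catT_succ_succ, add_mul]
      simp only [sum_congr rfl hstep, sum_add_distrib, catT_zero_right] at ihb ⊢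
      rw [← add_assoc, ihb, ihn, ← add_assoc m b 1, ← add_assoc m b 2,
        choose_two_mul_succ_add_succ, Nat.cast_add]

/-- `∑_{j=C}^{B} C^{A-j}_{B-j} * C(2j+1, j-C) = C(A+B+2, B-C)`. -/
theorem catalan_triangle_binomial_sum (A B C : ℕ) (hCB : C ≤ B) (hBA : B ≤ A) :
    ∑ j ∈ Finset.Icc C B, catT (A - j) (B - j) * Nat.choose (2 * j + 1) (j - C)
      = (Nat.choose (A + B + 2) (B - C) : ℚ) := by
  have hreindex : ∑ j ∈ Icc C B, catT (A - j) (B - j) * ((2 * j + 1).choose (j - C) : ℚ)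
      = ∑ p ∈ antidiagonal (B - C),
          catT (A - B + 1 + p.1 - 1) p.1 * ((2 * p.2 + (2 * C + 1)).choose p.2 : ℚ) := by
    refine sum_nbij' (fun j ↦ (B - j, j - C)) (fun p ↦ C + p.2) ?_ ?_ ?_ ?_ ?_
    all_goals intro x hx
    all_goals simp only [mem_Icc, HasAntidiagonal.mem_antidiagonal] at hx ⊢
    · omega
    · omega
    · omega
    · ext <;> (dsimp only; omega)
    · rw [show A - B + 1 + (B - x) - 1 = A - x by omega,
        show 2 * (x - C) + (2 * C + 1) = 2 * x + 1 by omega]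
  rw [hreindex, sum_antidiagonal_catT_mul_choose,
    show 2 * (B - C) + (2 * C + 1 + (A - B + 1)) = A + B + 2 by omega]
end

section
/- For n >= 2, sum_{k>=0} binomial(2n, n-4-2k) = 2^(2n-2) - (2n)!*(3n^2+n+2)/(2*n!*(n+2)!). -/
/-- `C(a, z)` with integer lower index, vanishing when `z < 0` (and when `z > a`). -/
def choosez (a : ℕ) (z : ℤ) : ℕ := if z < 0 then 0 else a.choose z.toNat

lemma choosez_neg {a : ℕ} {z : ℤ} (h : z < 0) : choosez a z = 0 := if_pos h

lemma choosez_succ (M : ℕ) (z : ℤ) :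
    choosez (M + 1) z = choosez M z + choosez M (z - 1) := by
  rcases lt_trichotomy z 0 with h | h | h
  · simp [choosez, h, show z - 1 < 0 by omega]
  · subst h; simp [choosez]
  · have h0 : ¬ z < 0 := by omega
    have h1 : ¬ z - 1 < 0 := by omega
    have ht : z.toNat = (z - 1).toNat + 1 := by omega
    simp only [choosez, if_neg h0, if_neg h1, ht, Nat.choose_succ_succ,
      Nat.succ_eq_add_one]
    omega

lemma sum_choosez_pair (M K : ℕ) (r : ℤ) :
    ∑ k ∈ Finset.range K, choosez (M + 1) (r - 2 * k)
      = ∑ i ∈ Finset.range (2 * K), choosez M (r - i) := by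
  induction K with
  | zero => simp
  | succ K ih =>
    rw [Finset.sum_range_succ, ih, choosez_succ,
        show 2 * (K + 1) = (2 * K + 1) + 1 by ring,
        Finset.sum_range_succ, Finset.sum_range_succ]
    have e1 : r - ((2 * K : ℕ) : ℤ) = r - 2 * (K : ℕ) := by push_cast; ring
    have e2 : r - ((2 * K + 1 : ℕ) : ℤ) = r - 2 * (K : ℕ) - 1 := by push_cast; ring
    rw [e1, e2]
    ring

lemma sum_choosez_tail (M m : ℕ) :
    ∑ i ∈ Finset.range (2 * m + 8), choosez M ((m : ℤ) - i)
      = ∑ j ∈ Finset.range (m + 1), M.choose j := by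
  have h1 : ∑ i ∈ Finset.range (2 * m + 8), choosez M ((m : ℤ) - i)
      = ∑ i ∈ Finset.range (m + 1), choosez M ((m : ℤ) - i) := by
    symm
    apply Finset.sum_subset (Finset.range_subset_range.2 (by omega))
    intro i _ hni
    simp only [Finset.mem_range] at hni
    exact choosez_neg (by omega)
  rw [h1, ← Finset.sum_range_reflect (fun j => M.choose j) (m + 1)]
  apply Finset.sum_congr rfl
  intro i hi
  simp only [Finset.mem_range] at hi
  unfold choosez
  rw [if_neg (by omega)]
  congr 1
  omega

lemma sum_range_add3 (f : ℕ → ℕ) (t : ℕ) :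
    ∑ j ∈ Finset.range (t + 3), f j
      = (∑ j ∈ Finset.range t, f j) + f t + f (t + 1) + f (t + 2) := by
  rw [show t + 3 = t + 1 + 1 + 1 by omega,
      Finset.sum_range_succ f (t + 1 + 1), Finset.sum_range_succ f (t + 1),
      Finset.sum_range_succ f t, show t + 1 + 1 = t + 2 by omega]

/-- `∑_{k ≥ 0} C(2n, n-4-2k) = 2^{2n-2} - (2n)!(3n²+n+2)/(2 n! (n+2)!)`, the sum
running over all `k` with `n-4-2k ≥ 0` (terms with negative lower index vanish). -/
theorem sum_alternate_binomials (n : ℕ) (hn : 2 ≤ n) :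
    (∑ k ∈ Finset.range n, (choosez (2 * n) ((n : ℤ) - 4 - 2 * k) : ℚ))
    = 2 ^ (2 * n - 2)
      - (Nat.factorial (2 * n) : ℚ) * (3 * (n : ℚ) ^ 2 + n + 2)
        / (2 * Nat.factorial n * Nat.factorial (n + 2)) := by
  rcases Nat.lt_or_ge n 4 with h | h
  · interval_cases n <;>
      norm_num [Finset.sum_range_succ, choosez, Nat.factorial]
  · obtain ⟨m, rfl⟩ : ∃ m, n = m + 4 := ⟨n - 4, by omega⟩
    -- the natural-number identity
    have hnat : (∑ k ∈ Finset.range (m + 4),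
          choosez (2 * (m + 4)) (((m + 4 : ℕ) : ℤ) - 4 - 2 * k))
        + ((2 * m + 7).choose (m + 1) + (2 * m + 7).choose (m + 2)
            + (2 * m + 7).choose (m + 3))
        = 4 ^ (m + 3) := by
      have e2 : ∀ k ∈ Finset.range (m + 4),
          choosez (2 * (m + 4)) (((m + 4 : ℕ) : ℤ) - 4 - 2 * k)
            = choosez ((2 * m + 7) + 1) ((m : ℤ) - 2 * k) := by
        intro k _
        rw [show 2 * (m + 4) = (2 * m + 7) + 1 by omega]
        congr 1
        push_cast; ring
      rw [Finset.sum_congr rfl e2, sum_choosez_pair,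
          show 2 * (m + 4) = 2 * m + 8 by ring, sum_choosez_tail]
      have half := Nat.sum_range_choose_halfway (m + 3)
      rw [show 2 * (m + 3) + 1 = 2 * m + 7 by ring,
          show m + 3 + 1 = m + 1 + 3 by omega,
          sum_range_add3 (fun j => (2 * m + 7).choose j) (m + 1),
          show m + 1 + 1 = m + 2 by omega, show m + 1 + 2 = m + 3 by omega] at half
      omega
    -- cast to ℚ
    have hQ : (∑ k ∈ Finset.range (m + 4),
          (choosez (2 * (m + 4)) (((m + 4 : ℕ) : ℤ) - 4 - 2 * k) : ℚ))
        = 4 ^ (m + 3)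
          - (((2 * m + 7).choose (m + 1) : ℚ) + (2 * m + 7).choose (m + 2)
              + (2 * m + 7).choose (m + 3)) := by
      have := congrArg (Nat.cast : ℕ → ℚ) hnat
      push_cast at this ⊢
      linarith
    rw [hQ]
    -- choose values as factorial ratios, in ℚ
    have mk : ∀ a b : ℕ, a + b = 2 * m + 7 →
        ((2 * m + 7).choose a : ℚ)
          = ((2 * m + 7).factorial : ℚ) / ((a.factorial : ℚ) * b.factorial) := by
      intro a b hab
      have h := Nat.choose_mul_factorial_mul_factorial (show a ≤ 2 * m + 7 by omega)
      rw [show 2 * m + 7 - a = b by omega] at h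
      rw [eq_div_iff (by positivity)]
      exact_mod_cast by rw [← h]; ring
    have c1 := mk (m + 1) (m + 6) (by ring)
    have c2 := mk (m + 2) (m + 5) (by ring)
    have c3 := mk (m + 3) (m + 4) (by ring)
    rw [c1, c2, c3]
    -- factorial expansions in ℚ
    have fs : ∀ j : ℕ, ((j + 1).factorial : ℚ) = ((j : ℚ) + 1) * (j.factorial : ℚ) := by
      intro j; rw [Nat.factorial_succ]; push_cast; ring
    have f2 : ((m + 2).factorial : ℚ) = ((m : ℚ) + 2) * (m + 1).factorial := by
      have := fs (m + 1); push_cast at this ⊢; linarith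
    have f3 : ((m + 3).factorial : ℚ) = ((m : ℚ) + 3) * (m + 2).factorial := by
      have := fs (m + 2); push_cast at this ⊢; linarith
    have f4 : ((m + 4).factorial : ℚ) = ((m : ℚ) + 4) * (m + 3).factorial := by
      have := fs (m + 3); push_cast at this ⊢; linarith
    have f5 : ((m + 5).factorial : ℚ) = ((m : ℚ) + 5) * (m + 4).factorial := by
      have := fs (m + 4); push_cast at this ⊢; linarith
    have f6 : ((m + 6).factorial : ℚ) = ((m : ℚ) + 6) * (m + 5).factorial := by
      have := fs (m + 5); push_cast at this ⊢; linarith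
    have f8 : ((2 * (m + 4)).factorial : ℚ)
        = (2 * (m : ℚ) + 8) * (2 * m + 7).factorial := by
      have := fs (2 * m + 7)
      rw [show 2 * (m + 4) = (2 * m + 7) + 1 by ring]
      push_cast at this ⊢; linarith
    rw [show m + 4 + 2 = m + 6 by omega, f8, f6, f5, f4, f3, f2,
        show 2 * (m + 4) - 2 = 2 * (m + 3) by omega, pow_mul]
    have hA : ((m + 1).factorial : ℚ) ≠ 0 := by positivity
    have h2 : ((m : ℚ) + 2) ≠ 0 := by positivity
    have h3 : ((m : ℚ) + 3) ≠ 0 := by positivity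
    have h4 : ((m : ℚ) + 4) ≠ 0 := by positivity
    have h5 : ((m : ℚ) + 5) ≠ 0 := by positivity
    have h6 : ((m : ℚ) + 6) ≠ 0 := by positivity
    push_cast
    field_simp
    ring
end
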